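/- Let G be a finite simple connected graph, d ≥ 1 an integer, and let (A, B) be a minimal d-cut of G. If u ∈ B is a vertex whose neighborhood is nonempty and satisfies N(u) ⊆ A, then B = {u}, and consequently the edge cut E(A, B) is exactly the set of edges incident with u. -/

import Mathlib

/-!
The star cut `({u}ᶜ, {u})` is a `d`-cut (its `B`-side degree is that of `u`, which is the
number of neighbors of `u` in `A`), and since `N(u) ⊆ A` its edge cut, the set of edges at `u`,
lies inside `E(A, B)`. Minimality forces `E(A, B)` to consist of the edges at `u`. If `B`
contained another vertex, connectivity would give an edge leaving `B \ {u}`; it cannot go to `u`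
(the neighbors of `u` lie in `A`) nor to `A` (it would be a cut edge missing `u`).
-/

variable {V : Type*}

/-- A `d`-cut of a simple graph `G`: a partition `(A, B)` of the vertex set into two
nonempty parts such that every vertex of `A` has at most `d` neighbors in `B` and
every vertex of `B` has at most `d` neighbors in `A`. -/
def IsDCut (G : SimpleGraph V) (d : ℕ) (A B : Set V) : Prop :=
  A.Nonempty ∧ B.Nonempty ∧ Disjoint A B ∧ A ∪ B = Set.univ ∧
    (∀ v ∈ A, (G.neighborSet v ∩ B).ncard ≤ d) ∧
    (∀ v ∈ B, (G.neighborSet v ∩ A).ncard ≤ d)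

/-- A vertex set `T` is monochromatic if every `d`-cut of `G` has `T` entirely on one side. -/
def Monochromatic (G : SimpleGraph V) (d : ℕ) (T : Set V) : Prop :=
  ∀ A B : Set V, IsDCut G d A B → T ⊆ A ∨ T ⊆ B

/-- The edge cut of a cut `(A, B)`: the set of edges of `G` with one endpoint in `A`
and the other endpoint in `B`. -/
def edgeCut (G : SimpleGraph V) (A B : Set V) : Set (Sym2 V) :=
  {e | e ∈ G.edgeSet ∧ ∃ u v, e = s(u, v) ∧ u ∈ A ∧ v ∈ B}

/-- A minimal `d`-cut: no `d`-cut has an edge cut that is a proper subset of its edge cut. -/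
def IsMinimalDCut (G : SimpleGraph V) (d : ℕ) (A B : Set V) : Prop :=
  IsDCut G d A B ∧ ∀ A' B' : Set V, IsDCut G d A' B' → ¬ edgeCut G A' B' ⊂ edgeCut G A B

/-- A maximal `d`-cut: no `d`-cut has an edge cut that properly contains its edge cut. -/
def IsMaximalDCut (G : SimpleGraph V) (d : ℕ) (A B : Set V) : Prop :=
  IsDCut G d A B ∧ ∀ A' B' : Set V, IsDCut G d A' B' → ¬ edgeCut G A B ⊂ edgeCut G A' B'

variable {G : SimpleGraph V} {d : ℕ} {A B : Set V} {u : V}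

theorem SimpleGraph.Connected.exists_adj_mem_notMem {S : Set V} {a b : V} (hconn : G.Connected)
    (ha : a ∈ S) (hb : b ∉ S) : ∃ x y, G.Adj x y ∧ x ∈ S ∧ y ∉ S := by
  obtain ⟨p⟩ := hconn.preconnected a b
  obtain ⟨e, -, he⟩ := p.exists_boundary_dart S ha hb
  exact ⟨e.fst, e.snd, e.adj, he⟩

theorem incidenceSet_subset_edgeCut (hu : u ∈ B) (hsub : G.neighborSet u ⊆ A) :
    G.incidenceSet u ⊆ edgeCut G A B := by
  rintro e ⟨he, hue⟩
  obtain ⟨v, rfl⟩ := Sym2.mem_iff_exists.mp hue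
  exact ⟨he, v, u, Sym2.eq_swap, hsub he, hu⟩

theorem edgeCut_compl_singleton : edgeCut G {u}ᶜ {u} = G.incidenceSet u := by
  refine subset_antisymm ?_ (incidenceSet_subset_edgeCut rfl (G.neighborSet_subset_compl u))
  rintro e ⟨he, v, w, rfl, -, rfl⟩
  exact ⟨he, Sym2.mem_mk_right v w⟩

theorem isDCut_compl_singleton (hd : 1 ≤ d) (hV : ({u}ᶜ : Set V).Nonempty)
    (hdeg : (G.neighborSet u).ncard ≤ d) : IsDCut G d {u}ᶜ {u} := by
  refine ⟨hV, Set.singleton_nonempty u, disjoint_compl_left, Set.compl_union_self _, ?_, ?_⟩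
  · intro v _
    calc (G.neighborSet v ∩ {u}).ncard ≤ ({u} : Set V).ncard :=
          Set.ncard_le_ncard Set.inter_subset_right (Set.finite_singleton u)
      _ ≤ d := (Set.ncard_singleton u).trans_le hd
  · rintro v rfl
    rwa [Set.inter_eq_left.mpr (G.neighborSet_subset_compl v)]

theorem eq_singleton_of_edgeCut_subset_incidenceSet (hconn : G.Connected) (hdisj : Disjoint A B)
    (hcover : A ∪ B = Set.univ) (hu : u ∈ B) (hsub : G.neighborSet u ⊆ A)
    (hcut : edgeCut G A B ⊆ G.incidenceSet u) : B = {u} := by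
  refine Set.eq_singleton_iff_unique_mem.mpr ⟨hu, fun w hw => ?_⟩
  by_contra hwu
  obtain ⟨x, y, hxy, ⟨hxB, hxu⟩, hy⟩ :=
    hconn.exists_adj_mem_notMem (S := B \ {u}) ⟨hw, hwu⟩ fun h => h.2 rfl
  by_cases hyB : y ∈ B
  · have hyu : y = u := by simpa [hyB] using hy
    subst hyu
    exact hdisj.ne_of_mem (hsub hxy.symm) hxB rfl
  · have hyA : y ∈ A := (hcover ▸ Set.mem_univ y).resolve_right hyB
    have huyx : u ∈ s(y, x) := (hcut ⟨hxy.symm, y, x, rfl, hyA, hxB⟩).2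
    rcases Sym2.mem_iff.mp huyx with rfl | rfl
    · exact hdisj.ne_of_mem hyA hu rfl
    · exact hxu rfl

theorem minimal_dcut_isolated_side (G : SimpleGraph V) (d : ℕ)
    (hd : 1 ≤ d) (hconn : G.Connected) (A B : Set V)
    (hmin : IsMinimalDCut G d A B) (u : V) (hu : u ∈ B)
    (hsub : G.neighborSet u ⊆ A) :
    B = {u} ∧ edgeCut G A B = {e | e ∈ G.edgeSet ∧ u ∈ e} := by
  obtain ⟨⟨hA, -, hdisj, hcover, -, hdB⟩, hminimal⟩ := hmin
  have hstar : IsDCut G d {u}ᶜ {u} := by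
    refine isDCut_compl_singleton hd (hA.mono fun a ha (hau : a = u) => ?_) ?_
    · exact hdisj.ne_of_mem ha hu hau
    · exact Set.inter_eq_left.mpr hsub ▸ hdB u hu
  have hcut : edgeCut G A B = G.incidenceSet u := by
    have hle := incidenceSet_subset_edgeCut hu hsub
    rw [← edgeCut_compl_singleton] at hle ⊢
    exact (hle.eq_or_ssubset.resolve_right (hminimal _ _ hstar)).symm
  exact ⟨eq_singleton_of_edgeCut_subset_incidenceSet hconn hdisj hcover hu hsub hcut.le, hcut⟩
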